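/- Let A be a commutative ring, and let P and P' be cochain complexes of A-modules with P^i = 0 for all i > k and P'^i = 0 for all i > k'. Then H^l(P ⊗_A P') = 0 for all l > k + k', and there is an isomorphism of A-modules H^k(P) ⊗_A H^{k'}(P') ≅ H^{k+k'}(P ⊗_A P'), where P ⊗_A P' denotes the total tensor product complex. -/

import Mathlib

open CategoryTheory Limits MonoidalCategory

instance {C : Type*} [Category C] [MonoidalCategory C] [Preadditive C]
    [MonoidalPreadditive C] : (curriedTensor C).Additive where
  map_add := by intros; ext; exact MonoidalPreadditive.add_whiskerRight _ _

instance {C : Type*} [Category C] [MonoidalCategory C] [Preadditive C]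
    [MonoidalPreadditive C] (X : C) : ((curriedTensor C).obj X).Additive where
  map_add := by intros; exact MonoidalPreadditive.whiskerLeft_add _ _

/-- The total tensor product complex `K ⊗_A L` of two cochain complexes of `A`-modules. -/
noncomputable abbrev tensorComplex {A : Type} [CommRing A]
    (K L : CochainComplex (ModuleCat A) ℤ) : CochainComplex (ModuleCat A) ℤ :=
  HomologicalComplex.mapBifunctor K L (curriedTensor (ModuleCat A)) (ComplexShape.up ℤ)

/-!
As `P^{k+1} = 0` and `P'^{k'+1} = 0`, the cohomology groups `H^k(P)` and `H^{k'}(P')` are the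
cokernels of the incoming differentials, and the total complex vanishes above degree `k + k'`.
In degree `k + k'` the only nonzero summand is `P^k ⊗ P'^{k'}`, and the incoming differential
is nonzero only on `P^{k-1} ⊗ P'^{k'}` and `P^k ⊗ P'^{k'-1}`, where it is `d ⊗ 1` and `± 1 ⊗ d'`.
So `H^{k+k'}(P ⊗ P')` is `P^k ⊗ P'^{k'}` modulo `im (d ⊗ 1) + im (1 ⊗ d')`, which by right
exactness of `⊗` is `coker d ⊗ coker d'`.
-/

section

variable {C : Type*} [Category C] [MonoidalCategory C] [Preadditive C] [MonoidalPreadditive C]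

lemma isZero_tensor_of_isZero_left {X : C} (hX : IsZero X) (Y : C) : IsZero (X ⊗ Y) := by
  rw [IsZero.iff_id_eq_zero, ← id_whiskerRight, hX.eq_of_src (𝟙 X) 0,
    MonoidalPreadditive.zero_whiskerRight]

lemma isZero_tensor_of_isZero_right (X : C) {Y : C} (hY : IsZero Y) : IsZero (X ⊗ Y) := by
  rw [IsZero.iff_id_eq_zero, ← whiskerLeft_id, hY.eq_of_src (𝟙 Y) 0,
    MonoidalPreadditive.whiskerLeft_zero]

end

lemma LinearMap.range_intUnits_smul {R M N : Type*} [Ring R] [AddCommGroup M] [Module R M]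
    [AddCommGroup N] [Module R N] (u : ℤˣ) (f : M →ₗ[R] N) : range (u • f) = range f := by
  rcases Int.units_eq_one_or u with rfl | rfl
  · rw [one_smul]
  · rw [Units.neg_smul, one_smul, range_neg]

universe v

namespace HomologicalComplex

noncomputable def homologyIsoQuotientRange {A : Type*} [CommRing A] {ι : Type*}
    {c : ComplexShape ι} (K : HomologicalComplex (ModuleCat.{v} A) c) {i j : ι}
    (hij : c.prev j = i) (hj : IsZero (K.X (c.next j))) :
    K.homology j ≅ ModuleCat.of A (K.X j ⧸ LinearMap.range (K.d i j).hom) :=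
  K.isoHomologyι j (c.next j) rfl (hj.eq_of_tgt _ _) ≪≫
    IsColimit.coconePointUniqueUpToIso (K.opcyclesIsCokernel i j hij)
      (ModuleCat.cokernelIsColimit _)

section

variable {C₁ C₂ D I₁ I₂ J : Type*} [Category C₁] [Category C₂] [Category D]
  [HasZeroMorphisms C₁] [HasZeroMorphisms C₂] [Preadditive D]
  {c₁ : ComplexShape I₁} {c₂ : ComplexShape I₂} (K₁ : HomologicalComplex C₁ c₁)
  (K₂ : HomologicalComplex C₂ c₂) (F : C₁ ⥤ C₂ ⥤ D) [F.PreservesZeroMorphisms]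
  [∀ X₁, (F.obj X₁).PreservesZeroMorphisms] (c : ComplexShape J) [TotalComplexShape c₁ c₂ c]
  [HasMapBifunctor K₁ K₂ F c] [DecidableEq J]

lemma isIso_ιMapBifunctor_of_isZero (i₁ : I₁) (i₂ : I₂) (j : J)
    (h : ComplexShape.π c₁ c₂ c (i₁, i₂) = j)
    (hz : ∀ i₁' i₂', ComplexShape.π c₁ c₂ c (i₁', i₂') = j → (i₁', i₂') ≠ (i₁, i₂) →
      IsZero ((F.obj (K₁.X i₁')).obj (K₂.X i₂'))) :
    IsIso (ιMapBifunctor K₁ K₂ F c i₁ i₂ j h) := by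
  classical
  let inv : (mapBifunctor K₁ K₂ F c).X j ⟶ (F.obj (K₁.X i₁)).obj (K₂.X i₂) :=
    mapBifunctorDesc fun i₁' i₂' _ ↦
      if e : (i₁', i₂') = (i₁, i₂) then eqToHom (by cases e; rfl) else 0
  refine ⟨inv, by simp [inv], mapBifunctor.hom_ext fun i₁' i₂' h' ↦ ?_⟩
  by_cases e : (i₁', i₂') = (i₁, i₂)
  · cases e
    simp [inv]
  · exact (hz i₁' i₂' h' e).eq_of_src _ _

end

section

variable {A : Type*} [CommRing A] {C₁ C₂ I₁ I₂ J : Type*} [Category C₁] [Category C₂]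
  [HasZeroMorphisms C₁] [HasZeroMorphisms C₂]
  {c₁ : ComplexShape I₁} {c₂ : ComplexShape I₂} {K₁ : HomologicalComplex C₁ c₁}
  {K₂ : HomologicalComplex C₂ c₂} {F : C₁ ⥤ C₂ ⥤ ModuleCat A} [F.PreservesZeroMorphisms]
  [∀ X₁, (F.obj X₁).PreservesZeroMorphisms] {c : ComplexShape J} [TotalComplexShape c₁ c₂ c]
  [HasMapBifunctor K₁ K₂ F c] [DecidableEq J]

lemma eq_top_of_range_ιMapBifunctor_le {j : J} (S : Submodule A ((mapBifunctor K₁ K₂ F c).X j))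
    (hS : ∀ i₁ i₂ h, LinearMap.range (ιMapBifunctor K₁ K₂ F c i₁ i₂ j h).hom ≤ S) : S = ⊤ := by
  have hmkQ : ModuleCat.ofHom S.mkQ = 0 := mapBifunctor.hom_ext fun i₁ i₂ h ↦ by
    ext x
    simpa [Submodule.Quotient.mk_eq_zero] using hS i₁ i₂ h ⟨x, rfl⟩
  rw [← S.ker_mkQ, ← ModuleCat.hom_ofHom S.mkQ, hmkQ]
  exact LinearMap.ker_zero

end

end HomologicalComplex

open HomologicalComplex

section TensorComplex

variable {A : Type} [CommRing A] {P P' : CochainComplex (ModuleCat A) ℤ} {k k' : ℤ}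

noncomputable abbrev ιTensorComplex (P P' : CochainComplex (ModuleCat A) ℤ) (i i' n : ℤ)
    (h : i + i' = n) : P.X i ⊗ P'.X i' ⟶ (tensorComplex P P').X n :=
  ιMapBifunctor P P' (curriedTensor (ModuleCat A)) (ComplexShape.up ℤ) i i' n h

lemma isZero_X_tensor_X (hP : ∀ i > k, IsZero (P.X i)) (hP' : ∀ i > k', IsZero (P'.X i))
    {i i' : ℤ} (h : k < i ∨ k' < i') : IsZero (P.X i ⊗ P'.X i') :=
  h.elim (fun hi ↦ isZero_tensor_of_isZero_left (hP i hi) _)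
    (fun hi' ↦ isZero_tensor_of_isZero_right _ (hP' i' hi'))

lemma isZero_tensorComplex_X (hP : ∀ i > k, IsZero (P.X i)) (hP' : ∀ i > k', IsZero (P'.X i))
    {n : ℤ} (hn : k + k' < n) : IsZero ((tensorComplex P P').X n) := by
  rw [IsZero.iff_id_eq_zero]
  refine mapBifunctor.hom_ext fun i i' (h : i + i' = n) ↦ ?_
  exact (isZero_X_tensor_X hP hP' (by omega)).eq_of_src _ _

lemma isIso_ιTensorComplex_top (hP : ∀ i > k, IsZero (P.X i))
    (hP' : ∀ i > k', IsZero (P'.X i)) : IsIso (ιTensorComplex P P' k k' (k + k') rfl) :=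
  isIso_ιMapBifunctor_of_isZero _ _ _ _ _ _ _ _ fun i i' (h : i + i' = k + k') hne ↦
    isZero_X_tensor_X hP hP' (by grind)

lemma ιTensorComplex_comp_d_of_isZero_right (hP' : IsZero (P'.X (k' + 1))) :
    ιTensorComplex P P' (k - 1) k' (k + k' - 1) (by omega) ≫
        (tensorComplex P P').d (k + k' - 1) (k + k') =
      (P.d (k - 1) k ▷ P'.X k') ≫ ιTensorComplex P P' k k' (k + k') rfl := by
  rw [mapBifunctor.d_eq, Preadditive.comp_add, mapBifunctor.ι_D₁, mapBifunctor.ι_D₂,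
    mapBifunctor.d₁_eq _ _ _ _ (show k - 1 + 1 = k by omega) k' (k + k') rfl,
    mapBifunctor.d₂_eq _ _ _ _ (k - 1) rfl (k + k') (show k - 1 + (k' + 1) = k + k' by omega),
    hP'.eq_of_tgt (P'.d k' (k' + 1)) 0]
  simp only [Functor.map_zero, zero_comp, smul_zero, add_zero]
  rw [show ComplexShape.ε₁ (ComplexShape.up ℤ) (ComplexShape.up ℤ) (ComplexShape.up ℤ)
    (k - 1, k') = 1 from rfl, one_smul]
  rfl

lemma ιTensorComplex_comp_d_of_isZero_left (hP : IsZero (P.X (k + 1))) :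
    ιTensorComplex P P' k (k' - 1) (k + k' - 1) (by omega) ≫
        (tensorComplex P P').d (k + k' - 1) (k + k') =
      k.negOnePow • ((P.X k ◁ P'.d (k' - 1) k') ≫ ιTensorComplex P P' k k' (k + k') rfl) := by
  rw [mapBifunctor.d_eq, Preadditive.comp_add, mapBifunctor.ι_D₁, mapBifunctor.ι_D₂,
    mapBifunctor.d₁_eq _ _ _ _ rfl (k' - 1) (k + k') (show k + 1 + (k' - 1) = k + k' by omega),
    mapBifunctor.d₂_eq _ _ _ _ k (show k' - 1 + 1 = k' by omega) (k + k') rfl,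
    hP.eq_of_tgt (P.d k (k + 1)) 0]
  simp only [Functor.map_zero, NatTrans.app_zero, zero_comp, smul_zero, zero_add]
  rfl

lemma range_tensorComplex_d_top (hP : ∀ i > k, IsZero (P.X i))
    (hP' : ∀ i > k', IsZero (P'.X i)) :
    LinearMap.range ((tensorComplex P P').d (k + k' - 1) (k + k')).hom =
      (LinearMap.range ((P.d (k - 1) k).hom.rTensor (P'.X k')) ⊔
        LinearMap.range ((P'.d (k' - 1) k').hom.lTensor (P.X k))).map
        (ιTensorComplex P P' k k' (k + k') rfl).hom := by
  set d := (tensorComplex P P').d (k + k' - 1) (k + k')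
  set ι₁ := ιTensorComplex P P' (k - 1) k' (k + k' - 1) (by omega)
  set ι₂ := ιTensorComplex P P' k (k' - 1) (k + k' - 1) (by omega)
  have hcover : LinearMap.range ι₁.hom ⊔ LinearMap.range ι₂.hom = ⊤ := by
    refine eq_top_of_range_ιMapBifunctor_le _ fun i i' (h : i + i' = k + k' - 1) ↦ ?_
    by_cases hi : i = k - 1
    · obtain rfl : i' = k' := by omega
      subst hi
      exact le_sup_left
    by_cases hi' : i = k
    · obtain rfl : i' = k' - 1 := by omega
      subst hi'
      exact le_sup_right
    have hzero : ιTensorComplex P P' i i' _ h = 0 :=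
      (isZero_X_tensor_X hP hP' (by omega)).eq_of_src _ _
    simp [hzero]
  calc LinearMap.range d.hom
      = (LinearMap.range ι₁.hom ⊔ LinearMap.range ι₂.hom).map d.hom := by
        rw [hcover, Submodule.map_top]
    _ = LinearMap.range (ι₁ ≫ d).hom ⊔ LinearMap.range (ι₂ ≫ d).hom := by
        rw [Submodule.map_sup, ← LinearMap.range_comp, ← LinearMap.range_comp]; rfl
    _ = _ := by
        -- the sign `(-1)^k` on the second summand does not change the image
        rw [ιTensorComplex_comp_d_of_isZero_right (hP' _ (by omega)),
          ιTensorComplex_comp_d_of_isZero_left (hP _ (by omega)), ModuleCat.hom_comp,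
          Units.smul_def, ModuleCat.hom_zsmul, ← Units.smul_def, LinearMap.range_intUnits_smul,
          ModuleCat.hom_comp, LinearMap.range_comp, LinearMap.range_comp, Submodule.map_sup]
        rfl

noncomputable def tensorComplexHomologyTopEquiv (hP : ∀ i > k, IsZero (P.X i))
    (hP' : ∀ i > k', IsZero (P'.X i)) :
    TensorProduct A (P.homology k) (P'.homology k') ≃ₗ[A]
      (tensorComplex P P').homology (k + k') :=
  have := isIso_ιTensorComplex_top hP hP'
  TensorProduct.congr
      (P.homologyIsoQuotientRange (CochainComplex.prev ℤ k)
        (by simpa using hP (k + 1) (by omega))).toLinearEquiv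
      (P'.homologyIsoQuotientRange (CochainComplex.prev ℤ k')
        (by simpa using hP' (k' + 1) (by omega))).toLinearEquiv ≪≫ₗ
    TensorProduct.quotientTensorQuotientEquiv _ _ ≪≫ₗ
    Submodule.Quotient.equiv _ _ (asIso (ιTensorComplex P P' k k' (k + k') rfl)).toLinearEquiv
      (by rw [range_tensorComplex_d_top hP hP', LinearMap.rTensor_range, LinearMap.lTensor_range]
          rfl) ≪≫ₗ
    ((tensorComplex P P').homologyIsoQuotientRange (CochainComplex.prev ℤ (k + k'))
      (by simpa using isZero_tensorComplex_X hP hP' (n := k + k' + 1) (by omega))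
      ).toLinearEquiv.symm

end TensorComplex

theorem stmt_17 (A : Type) [CommRing A] (P P' : CochainComplex (ModuleCat A) ℤ)
    (k k' : ℤ)
    (hP : ∀ i > k, IsZero (P.X i)) (hP' : ∀ i > k', IsZero (P'.X i)) :
    (∀ l > k + k', IsZero ((tensorComplex P P').homology l)) ∧
    Nonempty ((TensorProduct A (P.homology k) (P'.homology k')) ≃ₗ[A]
      ((tensorComplex P P').homology (k + k'))) :=
  ⟨fun _ hl ↦ ShortComplex.isZero_homology_of_isZero_X₂ _ (isZero_tensorComplex_X hP hP' hl),
    ⟨tensorComplexHomologyTopEquiv hP hP'⟩⟩
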